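/- arXiv:quant-ph/0703194 — 7 statements merged into one kernel-verified Lean document; each statement's English description precedes it below -/
import Mathlib

section
/- Let n be an odd positive integer and let X = (X_1, ..., X_n) be n independent bits, each equal to 0 with probability p > 1/2. Then for every permutation π of the set {0,1}^n of n-bit strings, the probability that the first bit of π(X) equals 0 is at most the probability that the majority value of X_1, ..., X_n equals 0. In particular the maximum over all permutations of the probability that the first bit of π(X) equals 0 is achieved by any permutation that maps exactly the strings with at least ⌈n/2⌉ zeros to strings whose first bit is 0. -/
/-!
Both the event `{(π X)₀ = 0}` and the majority event contain exactly half of the `2ⁿ` strings: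
the first is the preimage under `π` of a half-cube, the second is swapped with its complement by
negating every bit, since `n` is odd. The probability of a string is `pᵏ (1 - p)ⁿ⁻ᵏ`, where `k`
is its number of zeros, and this increases with `k` because `p ≥ 1 - p`. So every majority string
is at least as likely as every non-majority one, and among all sets of `2ⁿ⁻¹` strings the majority
set has the largest probability.
-/

open Finset

theorem Finset.sum_le_sum_of_card_eq_of_le_of_le {α β : Type*} [DecidableEq α]
    [AddCommMonoid β] [PartialOrder β] [IsOrderedAddMonoid β] {s t : Finset α} (f : α → β)
    (c : β) (hcard : #s = #t)
    (hs : ∀ x ∈ s \ t, f x ≤ c) (ht : ∀ x ∈ t \ s, c ≤ f x) :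
    ∑ x ∈ s, f x ≤ ∑ x ∈ t, f x := by
  rw [← sum_inter_add_sum_sdiff t s, ← sum_inter_add_sum_sdiff s t, inter_comm s t]
  gcongr _ + ?_
  calc ∑ x ∈ s \ t, f x ≤ #(s \ t) • c := sum_le_card_nsmul _ _ _ hs
    _ = #(t \ s) • c := by rw [card_sdiff_comm hcard]
    _ ≤ ∑ x ∈ t \ s, f x := card_nsmul_le_sum _ _ _ ht

theorem Finset.two_mul_card_filter_eq_card_of_involutive {α : Type*} [Fintype α]
    {σ : α → α} (hσ : Function.Involutive σ) (q : α → Prop) [DecidablePred q]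
    (hq : ∀ x, q (σ x) ↔ ¬ q x) :
    2 * #{x | q x} = Fintype.card α := by
  have hswap : #{x | q x} = #{x | ¬ q x} :=
    card_nbij' σ σ (fun x hx => by simpa [hq] using hx) (fun x hx => by simpa [hq] using hx)
      (fun x _ => hσ x) (fun x _ => hσ x)
  rw [two_mul, ← card_univ, ← card_filter_add_card_filter_not (s := univ) (p := q), hswap]

theorem pow_mul_pow_sub_le_pow_mul_pow_sub {R : Type*} [CommSemiring R] [PartialOrder R]
    [IsOrderedRing R] {q r : R} (hq : 0 ≤ q) (hqr : q ≤ r) {n a b : ℕ} (hab : a ≤ b)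
    (hbn : b ≤ n) : r ^ a * q ^ (n - a) ≤ r ^ b * q ^ (n - b) := by
  have hr : 0 ≤ r := hq.trans hqr
  obtain ⟨d, rfl⟩ := Nat.exists_eq_add_of_le hab
  have hsplit : n - a = d + (n - (a + d)) := by omega
  calc r ^ a * q ^ (n - a) = r ^ a * (q ^ d * q ^ (n - (a + d))) := by rw [hsplit, pow_add]
    _ ≤ r ^ a * (r ^ d * q ^ (n - (a + d))) := by gcongr
    _ = r ^ (a + d) * q ^ (n - (a + d)) := by ring

namespace BitString

variable {n : ℕ}

def numZeros (x : Fin n → Bool) : ℕ := #{i | x i = false}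

theorem numZeros_le (x : Fin n → Bool) : numZeros x ≤ n :=
  (card_filter_le _ _).trans_eq (card_fin n)

theorem card_filter_ne_false (x : Fin n → Bool) : #{i | ¬ x i = false} = n - numZeros x := by
  have := card_filter_add_card_filter_not (s := univ) (p := fun i => x i = false)
  rw [card_univ, Fintype.card_fin] at this
  unfold numZeros
  omega

theorem numZeros_not (x : Fin n → Bool) : numZeros (fun i => !x i) = n - numZeros x := by
  rw [← card_filter_ne_false]
  simp [numZeros]

theorem prod_ite_eq_false {M : Type*} [CommMonoid M] (x : Fin n → Bool) (a b : M) :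
    ∏ i, (if x i = false then a else b) = a ^ numZeros x * b ^ (n - numZeros x) := by
  rw [prod_ite, prod_const, prod_const, card_filter_ne_false, numZeros]

theorem two_mul_card_majority (hn : Odd n) :
    2 * #{x : Fin n → Bool | n < 2 * numZeros x} = Fintype.card (Fin n → Bool) := by
  refine two_mul_card_filter_eq_card_of_involutive (σ := fun x i => !x i)
    (fun x => by simp) _ fun x => ?_
  obtain ⟨k, rfl⟩ := hn
  have := numZeros_le x
  rw [numZeros_not]
  omega

theorem two_mul_card_filter_perm_apply_eq_false (π : Equiv.Perm (Fin n → Bool)) (i : Fin n) :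
    2 * #{x | π x i = false} = Fintype.card (Fin n → Bool) := by
  refine two_mul_card_filter_eq_card_of_involutive
    (σ := fun x => π.symm (Function.update (π x) i (!π x i))) (fun x => by simp) _ fun x => ?_
  cases π x i <;> simp

theorem sum_filter_perm_apply_eq_false_le_sum_majority (hn : Odd n)
    (π : Equiv.Perm (Fin n → Bool)) (i : Fin n) {p : ℝ} (hp : 1 / 2 ≤ p) (hp1 : p ≤ 1) :
    ∑ x with π x i = false, ∏ j, (if x j = false then p else 1 - p) ≤
      ∑ x : Fin n → Bool with n < 2 * numZeros x, ∏ j, (if x j = false then p else 1 - p) := by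
  simp only [prod_ite_eq_false]
  have hmono {a b : ℕ} (hab : a ≤ b) (hbn : b ≤ n) :=
    pow_mul_pow_sub_le_pow_mul_pow_sub (by linarith : (0 : ℝ) ≤ 1 - p)
      (by linarith : 1 - p ≤ p) hab hbn
  have hcard :=
    (two_mul_card_filter_perm_apply_eq_false π i).trans (two_mul_card_majority hn).symm
  obtain ⟨k, rfl⟩ := hn
  -- the threshold is the weight of a string with `k + 1` zeros, the least likely majority string
  refine sum_le_sum_of_card_eq_of_le_of_le _ (p ^ (k + 1) * (1 - p) ^ (2 * k + 1 - (k + 1)))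
    (by omega) (fun x hx => ?_) (fun x hx => ?_)
  · have : ¬ 2 * k + 1 < 2 * numZeros x := by simpa using (mem_sdiff.mp hx).2
    exact hmono (by omega) (by omega)
  · have : 2 * k + 1 < 2 * numZeros x := by simpa using (mem_sdiff.mp hx).1
    exact hmono (by omega) (numZeros_le x)

end BitString

/-- For `n` odd, `n` independent bits each `0` (formalized as `false`) with
probability `p > 1/2`, every permutation `π` of `{0,1}^n` makes the first bit of `π(X)` zero
with probability at most the probability that the majority of the bits is zero; and any
permutation mapping exactly the strings with at least `⌈n/2⌉` zeros to strings with first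
bit zero achieves this maximum. -/
theorem stmt0 (n : ℕ) (hn : Odd n) (hpos : 0 < n) (p : ℝ) (hp : 1 / 2 < p) (hp1 : p ≤ 1)
    (P : (Fin n → Bool) → ℝ)
    (hP : ∀ x, P x = ∏ i, (if x i = false then p else 1 - p)) :
    (∀ π : Equiv.Perm (Fin n → Bool),
      ∑ x ∈ Finset.univ.filter (fun x : Fin n → Bool => (π x) ⟨0, hpos⟩ = false), P x ≤
        ∑ x ∈ Finset.univ.filter
            (fun x : Fin n → Bool =>
              n < 2 * (Finset.univ.filter (fun i => x i = false)).card), P x) ∧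
    (∀ π : Equiv.Perm (Fin n → Bool),
      (∀ x : Fin n → Bool,
          (π x) ⟨0, hpos⟩ = false ↔
            (n + 1) / 2 ≤ (Finset.univ.filter (fun i => x i = false)).card) →
      ∑ x ∈ Finset.univ.filter (fun x : Fin n → Bool => (π x) ⟨0, hpos⟩ = false), P x =
        ∑ x ∈ Finset.univ.filter
            (fun x : Fin n → Bool =>
              n < 2 * (Finset.univ.filter (fun i => x i = false)).card), P x) := by
  simp only [hP]
  refine ⟨fun π => BitString.sum_filter_perm_apply_eq_false_le_sum_majority hn π _ hp.le hp1,
    fun π hπ => sum_congr (filter_congr fun x _ => ?_) fun _ _ => rfl⟩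
  obtain ⟨k, rfl⟩ := hn
  rw [hπ]
  omega
end

section
/- Fix a heat-bath bias 𝓑ᵢ > 0. Define the operation 3BC_hb on a finite list of bias values: it selects three entries 𝓑_k ≤ 𝓑_l ≤ 𝓑_m, replaces 𝓑_m by (𝓑_k + 𝓑_l + 𝓑_m − 𝓑_k𝓑_l𝓑_m)/2 (assumed to be ≥ 𝓑_m), and replaces the other two entries by 𝓑ᵢ. Consider any algorithm that starts from N entries all equal to 𝓑ᵢ and alternates 3BC_hb operations with arbitrary permutations of the entries. Then at every stage, if the entries are listed in nondecreasing order as 𝓑_1 ≤ 𝓑_2 ≤ ... ≤ 𝓑_N, we have 𝓑_j ≤ 𝓑ᵢ · F_j for all 1 ≤ j ≤ N, where F_j is the j-th Fibonacci number (F_1 = F_2 = 1, F_{j} = F_{j-1} + F_{j-2}). -/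
/-!
Write `c_t = Bi * F_t`. The invariant is: every entry is at least `Bi`, and for each `t ≤ N`
at least `t` entries are at most `c_t`. Permutations do not change these counts. A `3BC_hb` step
resets two entries to `Bi ≤ c_t`, so it can lower the count at level `c_t` only when all three
chosen entries were `≤ c_t` and the new one exceeds `c_t`. Since the majority bias of nonnegative
`a, b, c` is at most `X` once `a + b ≤ X` and `c ≤ X`, the recurrence `c_t = c_{t-2} + c_{t-1}`
then forces `𝓑_k > c_{t-2}` or `𝓑_l > c_{t-1}`. The invariant at that lower level, together
with the three (resp. two) chosen entries lying strictly between the two levels, yields `t + 1`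
entries `≤ c_t`, so the count stays at least `t` (for `t ≤ 2` the three chosen entries alone
already give `t + 1`).
-/

/-- One step of a heat-bath cooling algorithm on a register of `N` bias values:
either an arbitrary permutation of the entries, or a `3BC_hb` operation which selects three
distinct entries with `v i ≤ v j ≤ v k`, replaces `v k` by
`(v i + v j + v k − v i · v j · v k)/2` (assumed to be `≥ v k`), and resets the other two
entries to the heat-bath bias `Bi`. -/
inductive Step (Bi : ℝ) (N : ℕ) : (Fin N → ℝ) → (Fin N → ℝ) → Prop
  | perm (v : Fin N → ℝ) (σ : Equiv.Perm (Fin N)) : Step Bi N v (v ∘ σ)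
  | bc (v : Fin N → ℝ) (i j k : Fin N) (hij : i ≠ j) (hik : i ≠ k) (hjk : j ≠ k)
      (h1 : v i ≤ v j) (h2 : v j ≤ v k)
      (hinc : v k ≤ (v i + v j + v k - v i * v j * v k) / 2) :
      Step Bi N v
        (Function.update (Function.update
          (Function.update v k ((v i + v j + v k - v i * v j * v k) / 2)) i Bi) j Bi)

open Finset

section countLE

variable {ι α : Type*} [Fintype ι] [LinearOrder α]

def countLE (v : ι → α) (c : α) : ℕ := #{x | v x ≤ c}

lemma countLE_comp_perm (v : ι → α) (σ : Equiv.Perm ι) (c : α) :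
    countLE (v ∘ σ) c = countLE v c :=
  card_equiv σ (by simp)

lemma countLE_add_card_filter [DecidableEq ι] {v w : ι → α} {s : Finset ι}
    (hvw : ∀ x ∉ s, w x = v x) (c : α) :
    countLE w c + #{x ∈ s | v x ≤ c} = countLE v c + #{x ∈ s | w x ≤ c} := by
  have split (u : ι → α) :
      countLE u c = #{x ∈ s | u x ≤ c} + #{x ∈ sᶜ | u x ≤ c} := by
    simp only [countLE, card_filter, sum_add_sum_compl]
  have hcompl : #{x ∈ sᶜ | w x ≤ c} = #{x ∈ sᶜ | v x ≤ c} :=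
    congrArg card (filter_congr fun x hx => by rw [hvw x (mem_compl.mp hx)])
  rw [split w, split v, hcompl]
  omega

lemma countLE_add_card_le_countLE {v : ι → α} {c' c : α} (hc : c' ≤ c) {T : Finset ι}
    (hT : ∀ x ∈ T, c' < v x ∧ v x ≤ c) : countLE v c' + #T ≤ countLE v c := by
  classical
  have hdisj : Disjoint ({x | v x ≤ c'} : Finset ι) T :=
    disjoint_left.mpr fun x hx hxT => (hT x hxT).1.not_ge (mem_filter.mp hx).2
  rw [countLE, ← card_union_of_disjoint hdisj]
  refine card_le_card (union_subset (fun x hx => ?_) fun x hx => ?_)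
  · simp only [mem_filter, mem_univ, true_and] at hx ⊢
    exact hx.trans hc
  · simpa using (hT x hx).2

lemma card_le_countLE {v : ι → α} {c : α} {T : Finset ι} (hT : ∀ x ∈ T, v x ≤ c) :
    #T ≤ countLE v c :=
  card_le_card fun x hx => by simpa using hT x hx

end countLE

lemma majority_le {a b c X : ℝ} (ha : 0 ≤ a) (hb : 0 ≤ b) (hc : 0 ≤ c)
    (hab : a + b ≤ X) (hcX : c ≤ X) : (a + b + c - a * b * c) / 2 ≤ X := by
  rcases le_or_gt (a * b) 1 with h | h <;> nlinarith [mul_nonneg ha hb]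

lemma Monotone.apply_le_of_lt_countLE {α : Type*} [LinearOrder α] {N : ℕ} {v : Fin N → α}
    {σ : Equiv.Perm (Fin N)} (hσ : Monotone (v ∘ σ)) {j : Fin N} {c : α}
    (hj : j.val < countLE v c) : v (σ j) ≤ c := by
  by_contra! hc
  have hsub : ({x | (v ∘ σ) x ≤ c} : Finset (Fin N)) ⊆ Iio j := fun x hx => by
    simp only [mem_filter, mem_univ, true_and] at hx
    exact mem_Iio.mpr (lt_of_not_ge fun hjx => (hσ hjx).not_gt (hx.trans_lt hc))
  rw [← countLE_comp_perm v σ] at hj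
  exact (card_le_card hsub).not_gt (by rwa [Fin.card_Iio])

lemma le_mul_fib {B : ℝ} (hB : 0 ≤ B) {t : ℕ} (ht : 0 < t) : B ≤ B * Nat.fib t :=
  le_mul_of_one_le_right hB (by exact_mod_cast Nat.fib_pos.mpr ht)

/-- `t ≤ countLE v c` says that the `t`-th smallest entry of `v` is at most `c`. The lower bound
`Bi ≤ v x` keeps every bias nonnegative, as `majority_le` requires. -/
structure FibInvariant (Bi : ℝ) {N : ℕ} (v : Fin N → ℝ) : Prop where
  le_apply : ∀ x, Bi ≤ v x
  le_countLE : ∀ t ≤ N, t ≤ countLE v (Bi * Nat.fib t)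

namespace FibInvariant

variable {Bi : ℝ} {N : ℕ}

lemma const (hBi : 0 ≤ Bi) : FibInvariant Bi (fun _ : Fin N => Bi) where
  le_apply _ := le_rfl
  le_countLE t ht := by
    rcases t.eq_zero_or_pos with rfl | htpos
    · exact Nat.zero_le _
    · calc t ≤ #(univ : Finset (Fin N)) := by simpa using ht
        _ ≤ _ := card_le_countLE fun _ _ => le_mul_fib hBi htpos

lemma succ_le_countLE {v : Fin N → ℝ} (hv : FibInvariant Bi v) (hBi : 0 ≤ Bi) {i j k : Fin N}
    (hij : i ≠ j) (hik : i ≠ k) (hjk : j ≠ k) (h1 : v i ≤ v j) (h2 : v j ≤ v k)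
    {t : ℕ} (ht : t ≤ N) (hk : v k ≤ Bi * Nat.fib t)
    (hm : Bi * Nat.fib t < (v i + v j + v k - v i * v j * v k) / 2) :
    t + 1 ≤ countLE v (Bi * Nat.fib t) := by
  have hijk : #{i, j, k} = 3 := card_eq_three.mpr ⟨i, j, k, hij, hik, hjk, rfl⟩
  rcases lt_or_ge t 3 with ht3 | ht3
  · calc t + 1 ≤ #{i, j, k} := by omega
      _ ≤ _ := card_le_countLE (by simpa using ⟨(h1.trans h2).trans hk, h2.trans hk, hk⟩)
  obtain ⟨s, rfl⟩ := Nat.exists_eq_add_of_le' ht3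
  have hfib : Bi * Nat.fib (s + 1) + Bi * Nat.fib (s + 2) = Bi * Nat.fib (s + 3) := by
    rw [Nat.fib_add_two (n := s + 1)]
    push_cast
    ring
  have hmono {n : ℕ} (hn : n ≤ s + 3) : Bi * Nat.fib n ≤ Bi * Nat.fib (s + 3) :=
    mul_le_mul_of_nonneg_left (Nat.cast_le.mpr (Nat.fib_mono hn)) hBi
  rcases le_or_gt (v i) (Bi * Nat.fib (s + 1)) with hi | hi
  · have hj : Bi * Nat.fib (s + 2) < v j := by
      by_contra! hj
      have h0 : 0 ≤ v i := hBi.trans (hv.le_apply i)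
      exact hm.not_ge (majority_le h0 (h0.trans h1) (h0.trans (h1.trans h2))
        (hfib ▸ add_le_add hi hj) hk)
    calc s + 3 + 1 = (s + 2) + #{j, k} := by rw [card_pair hjk]
      _ ≤ countLE v (Bi * Nat.fib (s + 2)) + #{j, k} :=
          Nat.add_le_add_right (hv.le_countLE _ (by omega)) _
      _ ≤ _ := countLE_add_card_le_countLE (hmono (by omega))
          (by simpa using ⟨⟨hj, h2.trans hk⟩, hj.trans_le h2, hk⟩)
  · calc s + 3 + 1 = (s + 1) + #{i, j, k} := by rw [hijk]
      _ ≤ countLE v (Bi * Nat.fib (s + 1)) + #{i, j, k} :=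
          Nat.add_le_add_right (hv.le_countLE _ (by omega)) _
      _ ≤ _ := countLE_add_card_le_countLE (hmono (by omega))
          (by simpa using ⟨⟨hi, (h1.trans h2).trans hk⟩, ⟨hi.trans_le h1, h2.trans hk⟩,
            hi.trans_le (h1.trans h2), hk⟩)

lemma update_majority {v : Fin N → ℝ} (hv : FibInvariant Bi v) (hBi : 0 ≤ Bi) {i j k : Fin N}
    (hij : i ≠ j) (hik : i ≠ k) (hjk : j ≠ k) (h1 : v i ≤ v j) (h2 : v j ≤ v k)
    (hinc : v k ≤ (v i + v j + v k - v i * v j * v k) / 2) :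
    FibInvariant Bi (Function.update (Function.update
      (Function.update v k ((v i + v j + v k - v i * v j * v k) / 2)) i Bi) j Bi) := by
  set m := (v i + v j + v k - v i * v j * v k) / 2
  set u := Function.update (Function.update (Function.update v k m) i Bi) j Bi
  have hui : u i = Bi := by simp [u, hij]
  have huj : u j = Bi := by simp [u]
  have huk : u k = m := by simp [u, hik.symm, hjk.symm]
  have hu_off : ∀ x ∉ ({i, j, k} : Finset (Fin N)), u x = v x := fun x hx => by
    simp only [mem_insert, mem_singleton, not_or] at hx
    simp [u, hx.1, hx.2.1, hx.2.2]
  refine ⟨fun x => ?_, fun t ht => ?_⟩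
  · simp only [u, Function.update_apply]
    split_ifs
    exacts [le_rfl, le_rfl, (hv.le_apply k).trans hinc, hv.le_apply x]
  rcases t.eq_zero_or_pos with rfl | htpos
  · exact Nat.zero_le _
  set c := Bi * Nat.fib t
  have hBic : Bi ≤ c := le_mul_fib hBi htpos
  have hijk : #{i, j, k} = 3 := card_eq_three.mpr ⟨i, j, k, hij, hik, hjk, rfl⟩
  have hbal := countLE_add_card_filter hu_off c
  have hv3 : #{x ∈ {i, j, k} | v x ≤ c} ≤ 3 := hijk ▸ card_filter_le _ _
  have hu2 : 2 ≤ #{x ∈ {i, j, k} | u x ≤ c} := card_pair hij ▸ card_le_card (by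
    intro x hx
    simp only [mem_insert, mem_singleton] at hx
    rcases hx with rfl | rfl <;> simp [hui, huj, hBic])
  have hvt : t ≤ countLE v c := hv.le_countLE t ht
  by_cases hk : v k ≤ c
  · by_cases hm : m ≤ c
    · have hu3 : #{x ∈ {i, j, k} | u x ≤ c} = 3 := by
        rw [filter_true_of_mem, hijk]
        intro x hx
        simp only [mem_insert, mem_singleton] at hx
        rcases hx with rfl | rfl | rfl <;> simp [hui, huj, huk, hBic, hm]
      omega
    · have hvt' : t + 1 ≤ countLE v c :=
        hv.succ_le_countLE hBi hij hik hjk h1 h2 ht hk (not_le.mp hm)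
      omega
  · have hv2 : #{x ∈ {i, j, k} | v x ≤ c} < 3 :=
      hijk ▸ card_lt_card (filter_ssubset.mpr ⟨k, by simp, hk⟩)
    omega

lemma step {v w : Fin N → ℝ} (hv : FibInvariant Bi v) (hBi : 0 ≤ Bi) (h : Step Bi N v w) :
    FibInvariant Bi w := by
  cases h with
  | perm σ =>
    exact ⟨fun x => hv.le_apply (σ x),
      fun t ht => countLE_comp_perm v σ _ ▸ hv.le_countLE t ht⟩
  | bc i j k hij hik hjk h1 h2 hinc => exact hv.update_majority hBi hij hik hjk h1 h2 hinc

lemma of_reflTransGen {v : Fin N → ℝ} (hBi : 0 ≤ Bi)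
    (h : Relation.ReflTransGen (Step Bi N) (fun _ => Bi) v) : FibInvariant Bi v := by
  induction h with
  | refl => exact const hBi
  | tail _ hstep ih => exact ih.step hBi hstep

end FibInvariant

/-- starting from `N` entries all equal to the heat-bath bias `Bi > 0` and
alternating `3BC_hb` operations with arbitrary permutations, at every stage the entries,
listed in nondecreasing order, satisfy `𝓑_j ≤ Bi · F_j` where `F_j` is the `j`-th Fibonacci
number (`F_1 = F_2 = 1`).  Here `σ` sorts the entries: `v ∘ σ` is monotone, and the `j`-th
smallest entry (1-indexed, `j = j₀ + 1` for `j₀ : Fin N`) is `v (σ j₀)`. -/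
theorem stmt7 (Bi : ℝ) (hBi : 0 < Bi) (N : ℕ) (v : Fin N → ℝ)
    (hreach : Relation.ReflTransGen (Step Bi N) (fun _ => Bi) v)
    (σ : Equiv.Perm (Fin N)) (hsorted : Monotone (v ∘ σ)) (j : Fin N) :
    v (σ j) ≤ Bi * Nat.fib (j.val + 1) :=
  hsorted.apply_le_of_lt_countLE
    ((FibInvariant.of_reflTransGen hBi.le hreach).le_countLE (j.val + 1) j.isLt)
end

section
/- Let A, B, C be independent bits each equal to 0 with probability (1+𝓑)/2, let M = majority(A,B,C), and let M' be obtained from M by flipping it with probability ε (independently). Then the bias of M' equals ((3/2)𝓑 − (1/2)𝓑³)(1 − 2ε). -/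
/-- The majority of three bits (`false` = 0): it is `false` iff at least two of them are `false`. -/
def majBool (x y z : Bool) : Bool :=
  if 2 ≤ ((if x = false then 1 else 0) + (if y = false then 1 else 0) +
      (if z = false then 1 else 0) : ℕ) then false else true

/-- for independent bits `A,B,C` each `0` with probability `(1+𝓑)/2`, if
`M = majority(A,B,C)` is flipped with probability `ε` (independently, flip indicator `e`),
then the bias of the resulting bit `M' = M xor e` equals `((3/2)𝓑 − (1/2)𝓑³)(1 − 2ε)`. -/
theorem stmt8 (B ε : ℝ) (hB0 : -1 ≤ B) (hB1 : B ≤ 1) (he0 : 0 ≤ ε) (he1 : ε ≤ 1)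
    (pb : Bool → ℝ) (hpb : ∀ x, pb x = if x = false then (1 + B) / 2 else (1 - B) / 2)
    (pe : Bool → ℝ) (hpe : ∀ x, pe x = if x = true then ε else 1 - ε) :
    2 * (∑ a : Bool, ∑ b : Bool, ∑ c : Bool, ∑ e : Bool,
        if xor (majBool a b c) e = false then pb a * pb b * pb c * pe e else 0) - 1 =
      (3 / 2 * B - 1 / 2 * B ^ 3) * (1 - 2 * ε) := by
  simp only [Fintype.sum_bool, hpb, hpe, majBool]
  norm_num
  ring
end

section
/- Let a, b, c be independent bits each equal to 0 with probability p = (1+𝓑)/2, and let e1, ..., e7 be independent bits each equal to 1 with probability ε. Then the bit F = a + e1 + e4 + e7 + (a + b + e2 + e5)(a + c + e1 + e3 + e6) (mod 2) has bias 2·P(F=0) − 1 = (1/2)·𝓑·(1 − 2ε)³·(3 − 6ε + 4ε² − 𝓑²(1 − 2ε)³). -/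
set_option maxHeartbeats 4000000


/-- The value in `ZMod 2` of a bit represented as a `Bool` (`false` = 0, `true` = 1). -/
def bitZ (x : Bool) : ZMod 2 := if x then 1 else 0

/-- for independent bits `a,b,c` each `0` with probability `(1+𝓑)/2` and
independent error bits `e1,…,e7` each `1` with probability `ε`, the bit
`F = a + e1 + e4 + e7 + (a+b+e2+e5)(a+c+e1+e3+e6)` (mod 2) has bias
`2·P(F=0) − 1 = (1/2)·𝓑·(1−2ε)³·(3 − 6ε + 4ε² − 𝓑²(1−2ε)³)`. -/
theorem stmt12 (B ε : ℝ) (hB0 : -1 ≤ B) (hB1 : B ≤ 1) (he0 : 0 ≤ ε) (he1 : ε ≤ 1)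
    (pb : Bool → ℝ) (hpb : ∀ x, pb x = if x = false then (1 + B) / 2 else (1 - B) / 2)
    (pe : Bool → ℝ) (hpe : ∀ x, pe x = if x = true then ε else 1 - ε) :
    2 * (∑ a : Bool, ∑ b : Bool, ∑ c : Bool, ∑ e1 : Bool, ∑ e2 : Bool, ∑ e3 : Bool,
        ∑ e4 : Bool, ∑ e5 : Bool, ∑ e6 : Bool, ∑ e7 : Bool,
        if bitZ a + bitZ e1 + bitZ e4 + bitZ e7 +
            (bitZ a + bitZ b + bitZ e2 + bitZ e5) *
              (bitZ a + bitZ c + bitZ e1 + bitZ e3 + bitZ e6) = 0 then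
          pb a * pb b * pb c * pe e1 * pe e2 * pe e3 * pe e4 * pe e5 * pe e6 * pe e7
        else 0) - 1 =
      1 / 2 * B * (1 - 2 * ε) ^ 3 * (3 - 6 * ε + 4 * ε ^ 2 - B ^ 2 * (1 - 2 * ε) ^ 3) := by
  have hx : ∀ x y : Bool, bitZ x + bitZ y = bitZ (xor x y) := by decide
  have hm : ∀ x y : Bool, bitZ x * bitZ y = bitZ (x && y) := by decide
  have h0 : ∀ x : Bool, (bitZ x = 0) ↔ (x = false) := by decide
  simp only [hx, hm, h0, hpb, hpe, Fintype.sum_bool]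
  norm_num
  ring
end

section
/- For 𝓑 ∈ (0,1) and ε ∈ [0, 1/2), the inequality (1/2)𝓑(1−2ε)³(3 − 6ε + 4ε² − 𝓑²(1−2ε)³) > 𝓑 holds if and only if −2 + (1−2ε)³(3 − 6ε + 4ε² − 𝓑²(1−2ε)³) > 0. The left-hand side of this latter inequality is strictly decreasing in 𝓑 on [0,1], so there exists 𝓑 > 0 satisfying it if and only if −2 + (1−2ε)³(3 − 6ε + 4ε²) > 0. The function h(ε) = −2 + (1−2ε)³(3 − 6ε + 4ε²) has a unique root ε_th in (0, 1/2), and 0.048 < ε_th < 0.049. -/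
noncomputable def hfun : ℝ → ℝ := fun x => -2 + (1 - 2 * x) ^ 3 * (3 - 6 * x + 4 * x ^ 2)

lemma hkey (x : ℝ) : hfun x = -2 + (1 - 2*x)^3 + (1 - 2*x)^4 + (1 - 2*x)^5 := by
  unfold hfun; ring

lemma hanti : StrictAntiOn hfun (Set.Icc 0 (1/2)) := by
  intro a ha b hb hab
  obtain ⟨ha0, ha1⟩ := ha
  obtain ⟨hb0, hb1⟩ := hb
  have hq : (0:ℝ) ≤ 1 - 2 * b := by linarith
  have hp : 1 - 2 * b < 1 - 2 * a := by linarith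
  rw [hkey, hkey]
  have h3 := pow_lt_pow_left₀ hp hq (by norm_num : (3:ℕ) ≠ 0)
  have h4 := pow_lt_pow_left₀ hp hq (by norm_num : (4:ℕ) ≠ 0)
  have h5 := pow_lt_pow_left₀ hp hq (by norm_num : (5:ℕ) ≠ 0)
  linarith

lemma hcont : ContinuousOn hfun (Set.Icc 0 (1/2)) := by
  apply Continuous.continuousOn; unfold hfun; continuity

/-- for `𝓑 ∈ (0,1)` and `ε ∈ [0,1/2)`,
`(1/2)𝓑(1−2ε)³(3 − 6ε + 4ε² − 𝓑²(1−2ε)³) > 𝓑 ↔ −2 + (1−2ε)³(3 − 6ε + 4ε² − 𝓑²(1−2ε)³) > 0`;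
the left side of the latter is strictly decreasing in `𝓑` on `[0,1]`, so some `𝓑 > 0`
satisfies it iff `−2 + (1−2ε)³(3 − 6ε + 4ε²) > 0`; the function
`h(ε) = −2 + (1−2ε)³(3 − 6ε + 4ε²)` has a unique root `ε_th` in `(0,1/2)`, and
`0.048 < ε_th < 0.049`. -/
theorem stmt13 :
    (∀ B ε : ℝ, 0 < B → B < 1 → 0 ≤ ε → ε < 1 / 2 →
      (1 / 2 * B * (1 - 2 * ε) ^ 3 * (3 - 6 * ε + 4 * ε ^ 2 - B ^ 2 * (1 - 2 * ε) ^ 3) > B ↔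
        -2 + (1 - 2 * ε) ^ 3 * (3 - 6 * ε + 4 * ε ^ 2 - B ^ 2 * (1 - 2 * ε) ^ 3) > 0)) ∧
    (∀ ε : ℝ, 0 ≤ ε → ε < 1 / 2 →
      StrictAntiOn
        (fun B : ℝ => -2 + (1 - 2 * ε) ^ 3 * (3 - 6 * ε + 4 * ε ^ 2 - B ^ 2 * (1 - 2 * ε) ^ 3))
        (Set.Icc 0 1)) ∧
    (∀ ε : ℝ, 0 ≤ ε → ε < 1 / 2 →
      ((∃ B : ℝ, 0 < B ∧
          -2 + (1 - 2 * ε) ^ 3 * (3 - 6 * ε + 4 * ε ^ 2 - B ^ 2 * (1 - 2 * ε) ^ 3) > 0) ↔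
        -2 + (1 - 2 * ε) ^ 3 * (3 - 6 * ε + 4 * ε ^ 2) > 0)) ∧
    (∃! εth : ℝ, εth ∈ Set.Ioo (0 : ℝ) (1 / 2) ∧
      -2 + (1 - 2 * εth) ^ 3 * (3 - 6 * εth + 4 * εth ^ 2) = 0) ∧
    (∀ εth : ℝ, εth ∈ Set.Ioo (0 : ℝ) (1 / 2) →
      -2 + (1 - 2 * εth) ^ 3 * (3 - 6 * εth + 4 * εth ^ 2) = 0 →
      0.048 < εth ∧ εth < 0.049) := by
  refine ⟨?_, ?_, ?_, ?_, ?_⟩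
  · -- part 1
    intro B ε hB hB1 hε hε2
    set X : ℝ := (1 - 2 * ε) ^ 3 * (3 - 6 * ε + 4 * ε ^ 2 - B ^ 2 * (1 - 2 * ε) ^ 3) with hX
    have e : 1 / 2 * B * (1 - 2 * ε) ^ 3 * (3 - 6 * ε + 4 * ε ^ 2 - B ^ 2 * (1 - 2 * ε) ^ 3)
        = 1 / 2 * B * X := by rw [hX]; ring
    rw [e]
    constructor
    · intro h
      nlinarith [h, hB]
    · intro h
      nlinarith [mul_pos hB h]
  · -- part 2
    intro ε hε hε2 a ha b hb hab
    obtain ⟨ha0, _⟩ := ha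
    obtain ⟨hb0, _⟩ := hb
    have ht : (0:ℝ) < 1 - 2 * ε := by linarith
    have h6 : (0:ℝ) < ((1 - 2*ε)^3)^2 := by positivity
    simp only
    have key : ∀ x : ℝ, -2 + (1 - 2 * ε) ^ 3 * (3 - 6 * ε + 4 * ε ^ 2 - x ^ 2 * (1 - 2 * ε) ^ 3)
        = -2 + (1 - 2 * ε) ^ 3 * (3 - 6 * ε + 4 * ε ^ 2) - x^2 * ((1 - 2*ε)^3)^2 := by
      intro x; ring
    rw [key a, key b]
    have h2 : a^2 < b^2 := by nlinarith
    nlinarith [mul_lt_mul_of_pos_right h2 h6]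
  · -- part 3
    intro ε hε hε2
    have ht : (0:ℝ) < 1 - 2 * ε := by linarith
    have ht1 : 1 - 2 * ε ≤ 1 := by linarith
    have h3 : (0:ℝ) < (1 - 2*ε)^3 := by positivity
    have h31 : (1 - 2*ε)^3 ≤ 1 := pow_le_one₀ ht.le ht1
    have key : ∀ x : ℝ, -2 + (1 - 2 * ε) ^ 3 * (3 - 6 * ε + 4 * ε ^ 2 - x ^ 2 * (1 - 2 * ε) ^ 3)
        = -2 + (1 - 2 * ε) ^ 3 * (3 - 6 * ε + 4 * ε ^ 2) - x^2 * ((1 - 2*ε)^3)^2 := by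
      intro x; ring
    constructor
    · rintro ⟨B, hB, hgt⟩
      rw [key B] at hgt
      nlinarith [mul_nonneg (sq_nonneg B) (sq_nonneg ((1 - 2*ε)^3))]
    · intro hpos
      set d : ℝ := -2 + (1 - 2*ε)^3 * (3 - 6*ε + 4*ε^2) with hd
      have hd0 : 0 < d := hpos
      refine ⟨Real.sqrt d / 2, by positivity, ?_⟩
      rw [key]
      have hB2 : (Real.sqrt d / 2)^2 = d / 4 := by
        rw [div_pow, Real.sq_sqrt hd0.le]; norm_num
      rw [hB2]
      have hk2 : ((1 - 2*ε)^3)^2 ≤ 1 := by nlinarith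
      nlinarith [mul_le_of_le_one_right (le_of_lt (by linarith : (0:ℝ) < d/4)) hk2]
  · -- part 4
    have h0 : hfun 0 = 1 := by unfold hfun; norm_num
    have hhalf : hfun (1/2) = -2 := by unfold hfun; norm_num
    have hmem : (0:ℝ) ∈ Set.Ioo (hfun (1/2)) (hfun 0) := by
      rw [h0, hhalf]; constructor <;> norm_num
    have := intermediate_value_Ioo' (by norm_num : (0:ℝ) ≤ 1/2) hcont hmem
    obtain ⟨x, hx, hx0⟩ := this
    refine ⟨x, ⟨hx, by simpa [hfun] using hx0⟩, ?_⟩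
    rintro y ⟨hy, hy0⟩
    have hyI : y ∈ Set.Icc (0:ℝ) (1/2) := ⟨hy.1.le, hy.2.le⟩
    have hxI : x ∈ Set.Icc (0:ℝ) (1/2) := ⟨hx.1.le, hx.2.le⟩
    apply hanti.injOn hyI hxI
    rw [hx0]; simpa [hfun] using hy0
  · -- part 5
    intro εth hmem heq
    have hI : εth ∈ Set.Icc (0:ℝ) (1/2) := ⟨hmem.1.le, hmem.2.le⟩
    have heq' : hfun εth = 0 := by simpa [hfun] using heq
    have hA : hfun 0.048 > 0 := by rw [hkey]; norm_num
    have hB : hfun 0.049 < 0 := by rw [hkey]; norm_num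
    have hAI : (0.048:ℝ) ∈ Set.Icc (0:ℝ) (1/2) := by norm_num
    have hBI : (0.049:ℝ) ∈ Set.Icc (0:ℝ) (1/2) := by norm_num
    constructor
    · by_contra hcon
      push_neg at hcon
      have := hanti.antitoneOn hI hAI hcon
      linarith
    · by_contra hcon
      push_neg at hcon
      have := hanti.antitoneOn hBI hI hcon
      linarith
end

section
/- Fix s and d with 0 < d < s < 1/3, and consider the cubic polynomial q(𝓑) = 𝓑³(s−1) + 𝓑(1−3s) + 2d. Then q has exactly one positive real root r, this root satisfies r < 1, and for 𝓑 ∈ (0,1) the inequality ((3/2)𝓑 − (1/2)𝓑³)(1−s) + d > 𝓑 holds if and only if 𝓑 < r. Hence r is the maximum bias achievable by a 3-bit majority step followed by a debiasing error with parameters s = ε0 + ε1 and d = ε1 − ε0. -/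
/-- for `0 < d < s < 1/3`, the cubic `q(𝓑) = 𝓑³(s−1) + 𝓑(1−3s) + 2d` has
exactly one positive real root `r`, this root satisfies `r < 1`, and for `𝓑 ∈ (0,1)` the
inequality `((3/2)𝓑 − (1/2)𝓑³)(1−s) + d > 𝓑` holds iff `𝓑 < r`.  Hence `r` is the maximum
bias achievable by a 3-bit majority step followed by a debiasing error with parameters
`s = ε0 + ε1`, `d = ε1 − ε0`. -/
theorem stmt17 (s d : ℝ) (hd : 0 < d) (hds : d < s) (hs : s < 1 / 3) :
    ∃ r : ℝ, 0 < r ∧ r ^ 3 * (s - 1) + r * (1 - 3 * s) + 2 * d = 0 ∧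
      (∀ r' : ℝ, 0 < r' → r' ^ 3 * (s - 1) + r' * (1 - 3 * s) + 2 * d = 0 → r' = r) ∧
      r < 1 ∧
      (∀ B : ℝ, 0 < B → B < 1 →
        ((3 / 2 * B - 1 / 2 * B ^ 3) * (1 - s) + d > B ↔ B < r)) := by
  have hs1 : s < 1 := by linarith
  -- Existence of a root in (0,1) by the intermediate value theorem
  set f : ℝ → ℝ := fun x => x ^ 3 * (s - 1) + x * (1 - 3 * s) + 2 * d with hf
  have hcont : ContinuousOn f (Set.Icc (0:ℝ) 1) := by
    apply Continuous.continuousOn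
    fun_prop
  have h01 : (0:ℝ) ≤ 1 := by norm_num
  have hmem : (0:ℝ) ∈ Set.Ioo (f 1) (f 0) := by
    constructor
    · simp only [hf]; nlinarith
    · simp only [hf]; nlinarith
  obtain ⟨r, hrIoo, hr⟩ := intermediate_value_Ioo' h01 hcont hmem
  obtain ⟨hr0, hr1⟩ := hrIoo
  have hr' : r ^ 3 * (s - 1) + r * (1 - 3 * s) + 2 * d = 0 := hr
  -- Key factorization: r * q(B) = (r - B) * ((1-s)*r*B*(B+r) + 2*d)
  have key : ∀ B : ℝ,
      r * (B ^ 3 * (s - 1) + B * (1 - 3 * s) + 2 * d)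
        = (r - B) * ((1 - s) * r * B * (B + r) + 2 * d) := by
    intro B
    linear_combination B * hr'
  have Fpos : ∀ B : ℝ, 0 ≤ B → 0 < (1 - s) * r * B * (B + r) + 2 * d := by
    intro B hB
    nlinarith [mul_nonneg (mul_nonneg (mul_nonneg (by linarith : (0:ℝ) ≤ 1 - s) hr0.le) hB)
      (by linarith : (0:ℝ) ≤ B + r)]
  refine ⟨r, hr0, hr', ?_, hr1, ?_⟩
  · intro r' hr'0 hroot
    have h1 := key r'
    rw [hroot, mul_zero] at h1
    have h2 := Fpos r' hr'0.le
    have : r - r' = 0 := by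
      rcases mul_eq_zero.mp h1.symm with h | h
      · exact h
      · linarith
    linarith
  · intro B hB0 hB1
    have hq : (3 / 2 * B - 1 / 2 * B ^ 3) * (1 - s) + d - B
        = (B ^ 3 * (s - 1) + B * (1 - 3 * s) + 2 * d) / 2 := by ring
    have hF := Fpos B hB0.le
    have hk := key B
    constructor
    · intro h
      have hqB : 0 < B ^ 3 * (s - 1) + B * (1 - 3 * s) + 2 * d := by linarith
      have : 0 < (r - B) * ((1 - s) * r * B * (B + r) + 2 * d) := by
        rw [← hk]; positivity
      nlinarith
    · intro h
      have : 0 < r * (B ^ 3 * (s - 1) + B * (1 - 3 * s) + 2 * d) := by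
        rw [hk]
        exact mul_pos (by linarith) hF
      nlinarith
end

section
/- Let n be an odd positive integer and work with permutations of ZMod (3n), whose elements are grouped into n consecutive triples; position 3k is an A-cell, 3k+1 a B-cell, and 3k+2 a C-cell. Let S_AB be the product of the disjoint transpositions (3k, 3k+1) for all k, S_BC the product of the transpositions (3k+1, 3k+2) for all k, and S_AC the product of the transpositions (3k+2, 3k+3 mod 3n) for all k. Then the composite permutation S_AB ∘ S_BC ∘ S_AB ∘ S_AC maps each A-cell 3k to the A-cell 3(k−1) mod 3n of the adjacent triple on one side, maps each C-cell 3k+2 to the C-cell 3(k+1)+2 mod 3n of the adjacent triple on the other side, and fixes every B-cell 3k+1. -/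
/-- on a closed loop of `n` ABC-triples (`n` odd), with positions indexed by
`ZMod (3n)` (position `3k` an A-cell, `3k+1` a B-cell, `3k+2` a C-cell), let `S_AB` be the
product of the disjoint transpositions `(3k, 3k+1)`, `S_BC` the product of the
transpositions `(3k+1, 3k+2)`, and `S_AC` the product of the transpositions
`(3k+2, 3k+3 mod 3n)`.  Then the composite `S_AB ∘ S_BC ∘ S_AB ∘ S_AC` (with `S_AC` applied
first) maps each A-cell `3k` to the A-cell `3k − 3` of the adjacent triple on one side, maps
each C-cell `3k+2` to the C-cell `3k+2+3` of the adjacent triple on the other side, and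
fixes every B-cell `3k+1`.  The permutations `S_AB`, `S_BC`, `S_AC` are specified by their
action on each triple, which determines them as products of disjoint transpositions. -/
theorem stmt19 (n : ℕ) (hn : Odd n) (hpos : 0 < n)
    (SAB SBC SAC : Equiv.Perm (ZMod (3 * n)))
    (hSAB : ∀ k : ℕ, k < n →
      SAB ((3 * k : ℕ) : ZMod (3 * n)) = ((3 * k + 1 : ℕ) : ZMod (3 * n)) ∧
      SAB ((3 * k + 1 : ℕ) : ZMod (3 * n)) = ((3 * k : ℕ) : ZMod (3 * n)) ∧
      SAB ((3 * k + 2 : ℕ) : ZMod (3 * n)) = ((3 * k + 2 : ℕ) : ZMod (3 * n)))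
    (hSBC : ∀ k : ℕ, k < n →
      SBC ((3 * k + 1 : ℕ) : ZMod (3 * n)) = ((3 * k + 2 : ℕ) : ZMod (3 * n)) ∧
      SBC ((3 * k + 2 : ℕ) : ZMod (3 * n)) = ((3 * k + 1 : ℕ) : ZMod (3 * n)) ∧
      SBC ((3 * k : ℕ) : ZMod (3 * n)) = ((3 * k : ℕ) : ZMod (3 * n)))
    (hSAC : ∀ k : ℕ, k < n →
      SAC ((3 * k + 2 : ℕ) : ZMod (3 * n)) = ((3 * k + 3 : ℕ) : ZMod (3 * n)) ∧
      SAC ((3 * k + 3 : ℕ) : ZMod (3 * n)) = ((3 * k + 2 : ℕ) : ZMod (3 * n)) ∧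
      SAC ((3 * k + 1 : ℕ) : ZMod (3 * n)) = ((3 * k + 1 : ℕ) : ZMod (3 * n))) :
    ∀ k : ℕ, k < n →
      (SAB * SBC * SAB * SAC) ((3 * k : ℕ) : ZMod (3 * n)) =
          ((3 * k : ℕ) : ZMod (3 * n)) - 3 ∧
      (SAB * SBC * SAB * SAC) ((3 * k + 2 : ℕ) : ZMod (3 * n)) =
          ((3 * k + 2 : ℕ) : ZMod (3 * n)) + 3 ∧
      (SAB * SBC * SAB * SAC) ((3 * k + 1 : ℕ) : ZMod (3 * n)) =
          ((3 * k + 1 : ℕ) : ZMod (3 * n)) := by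
  have h3n : ((3 * n : ℕ) : ZMod (3 * n)) = 0 := ZMod.natCast_self _
  intro k hk
  refine ⟨?_, ?_, ?_⟩
  · -- A-cell
    obtain ⟨m, hm, hcast, hres⟩ :
        ∃ m, m < n ∧ ((3 * k : ℕ) : ZMod (3 * n)) = ((3 * m + 3 : ℕ) : ZMod (3 * n)) ∧
          ((3 * m : ℕ) : ZMod (3 * n)) = ((3 * k : ℕ) : ZMod (3 * n)) - 3 := by
      rcases Nat.eq_zero_or_pos k with rfl | hk0
      · refine ⟨n - 1, by omega, ?_, ?_⟩
        · have h1 : 3 * (n - 1) + 3 = 3 * n := by omega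
          rw [h1, h3n]; simp
        · have h1 : 3 * (n - 1) + 3 = 3 * n := by omega
          have h2 : ((3 * (n - 1) + 3 : ℕ) : ZMod (3 * n)) = 0 := by rw [h1, h3n]
          push_cast at h2 ⊢
          linear_combination h2
      · refine ⟨k - 1, by omega, ?_, ?_⟩
        · exact congrArg _ (by omega)
        · have h1 : 3 * (k - 1) + 3 = 3 * k := by omega
          have h2 : ((3 * (k - 1) + 3 : ℕ) : ZMod (3 * n)) = ((3 * k : ℕ) : ZMod (3 * n)) := by
            rw [h1]
          push_cast at h2 ⊢
          linear_combination h2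
    rw [hcast]
    simp only [Equiv.Perm.mul_apply]
    rw [(hSAC m hm).2.1, (hSAB m hm).2.2, (hSBC m hm).2.1, (hSAB m hm).2.1, hres, hcast]
  · -- C-cell
    obtain ⟨m, hm, hcast, hres⟩ :
        ∃ m, m < n ∧ ((3 * k + 3 : ℕ) : ZMod (3 * n)) = ((3 * m : ℕ) : ZMod (3 * n)) ∧
          ((3 * m + 2 : ℕ) : ZMod (3 * n)) = ((3 * k + 2 : ℕ) : ZMod (3 * n)) + 3 := by
      rcases Nat.lt_or_ge (k + 1) n with h | h
      · refine ⟨k + 1, h, by exact congrArg _ (by omega : 3 * k + 3 = 3 * (k + 1)), by push_cast; ring⟩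
      · have hk1 : k = n - 1 := by omega
        refine ⟨0, hpos, ?_, ?_⟩
        · have h1 : 3 * k + 3 = 3 * n := by omega
          rw [h1, h3n]; simp
        · have h1 : 3 * k + 3 = 3 * n := by omega
          have h2 : ((3 * k + 3 : ℕ) : ZMod (3 * n)) = 0 := by rw [h1, h3n]
          push_cast at h2 ⊢
          linear_combination -h2
    simp only [Equiv.Perm.mul_apply]
    rw [(hSAC k hk).1, hcast, (hSAB m hm).1, (hSBC m hm).1, (hSAB m hm).2.2, hres]
  · -- B-cell
    simp only [Equiv.Perm.mul_apply]
    rw [(hSAC k hk).2.2, (hSAB k hk).2.1, (hSBC k hk).2.2, (hSAB k hk).1]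
end
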